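/- arXiv:1709.10265 — 4 statements merged into one kernel-verified Lean document; each statement's English description precedes it below -/
import Mathlib

section
/- Let f be a non-constant entire function and z a complex number. Then the set {φ(z) : φ holomorphic near z with f ∘ φ = f near z} has no finite accumulation point. -/
/-- The Aut(f)-orbit of a point has no finite accumulation point: if `f` is a
non-constant entire function, `φ n` are functions analytic at `z` satisfying the
automorphic equation `f ∘ φ n = f` near `z`, the values `φ n z` are pairwise
distinct, and they converge to a finite limit `b`, we get a contradiction. -/
theorem stmt0 (f : ℂ → ℂ) (hf : Differentiable ℂ f)
    (hnc : ¬ ∃ C : ℂ, ∀ w, f w = C)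
    (z b : ℂ) (φ : ℕ → ℂ → ℂ)
    (hφ : ∀ n, AnalyticAt ℂ (φ n) z)
    (haut : ∀ n, ∀ᶠ w in nhds z, f (φ n w) = f w)
    (hinj : Function.Injective (fun n => φ n z))
    (hlim : Filter.Tendsto (fun n => φ n z) Filter.atTop (nhds b)) :
    False := by
  -- values at z: f (φ n z) = f z
  have hval : ∀ n, f (φ n z) = f z := fun n => (haut n).self_of_nhds
  -- eventually φ n z ≠ b
  have hne : ∀ᶠ n in Filter.atTop, φ n z ≠ b := by
    by_cases h : ∃ n0, φ n0 z = b
    · obtain ⟨n0, hn0⟩ := h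
      refine Filter.eventually_atTop.2 ⟨n0 + 1, fun n hn hb => ?_⟩
      have : n = n0 := hinj (by simpa using hb.trans hn0.symm)
      omega
    · exact Filter.Eventually.of_forall fun n hb => h ⟨n, hb⟩
  have hlim' : Filter.Tendsto (fun n => φ n z) Filter.atTop (nhdsWithin b {b}ᶜ) :=
    tendsto_nhdsWithin_of_tendsto_nhds_of_eventually_within _ hlim
      (hne.mono fun n h => h)
  have hfreq : ∃ᶠ w in nhdsWithin b {b}ᶜ, (fun w => f w - f z) w = 0 := by
    refine hlim'.frequently (Filter.Frequently.of_forall fun n => ?_)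
    simp [hval n]
  have hg : AnalyticOnNhd ℂ (fun w => f w - f z) Set.univ := fun x _ =>
    ((hf.analyticAt x).sub analyticAt_const)
  have := hg.eqOn_zero_of_preconnected_of_frequently_eq_zero
    isPreconnected_univ (Set.mem_univ b) hfreq
  exact hnc ⟨f z, fun w => by have := this (Set.mem_univ w); simpa [sub_eq_zero] using this⟩
end

section
/- Let f be entire and non-constant, and suppose φ(z) = cz + b with c ≠ 1 satisfies f(φ(z)) = f(z) for all z. Let z₀ = b/(1−c) and let n ≥ 2 be the order of vanishing of f − f(z₀) at z₀ (equivalently, the smallest n with f^{(n)}(z₀) ≠ 0). Then c^n = 1, i.e., c = e^{2πik/n} for some k ∈ {0, …, n−1}. -/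
/-! Differentiating `f (c z + b) = f z` `n` times and evaluating at the fixed point `z₀` of
`z ↦ c z + b` gives `c ^ n f⁽ⁿ⁾(z₀) = f⁽ⁿ⁾(z₀)`, so `c ^ n = 1` as soon as `f⁽ⁿ⁾(z₀) ≠ 0`. -/

section AffineInvariance

variable {𝕜 F : Type*} [NontriviallyNormedField 𝕜] [NormedAddCommGroup F] [NormedSpace 𝕜 F]

theorem iteratedDeriv_comp_mul_add {n : ℕ} {f : 𝕜 → F} (hf : ContDiff 𝕜 n f) (c b : 𝕜) :
    iteratedDeriv n (fun x => f (c * x + b)) = fun x => c ^ n • iteratedDeriv n f (c * x + b) := by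
  have hshift : ContDiff 𝕜 n (fun w => f (w + b)) := hf.comp (contDiff_id.add contDiff_const)
  rw [iteratedDeriv_comp_const_smul hshift c, iteratedDeriv_comp_add_const]

theorem pow_eq_one_of_comp_mul_add_eq {n : ℕ} {f : 𝕜 → F} (hf : ContDiff 𝕜 n f) {c b z₀ : 𝕜}
    (hinv : ∀ z, f (c * z + b) = f z) (hfix : c * z₀ + b = z₀)
    (hnz : iteratedDeriv n f z₀ ≠ 0) : c ^ n = 1 := by
  have hscale : c ^ n • iteratedDeriv n f z₀ = iteratedDeriv n f z₀ := by
    simpa only [funext hinv, hfix] using (congrFun (iteratedDeriv_comp_mul_add hf c b) z₀).symm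
  have hsub : (c ^ n - 1) • iteratedDeriv n f z₀ = 0 := by
    rw [sub_smul, one_smul, hscale, sub_self]
  exact sub_eq_zero.mp ((smul_eq_zero.mp hsub).resolve_right hnz)

end AffineInvariance

theorem stmt5_general (f : ℂ → ℂ) (hf : Differentiable ℂ f)
    (c b : ℂ) (hc : c ≠ 1)
    (haut : ∀ z : ℂ, f (c * z + b) = f z)
    (n : ℕ)
    (hnz : iteratedDeriv n f (b / (1 - c)) ≠ 0) :
    c ^ n = 1 := by
  have hfix : c * (b / (1 - c)) + b = b / (1 - c) := by
    have : (1 : ℂ) - c ≠ 0 := sub_ne_zero.mpr hc.symm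
    field_simp
    ring
  exact pow_eq_one_of_comp_mul_add_eq hf.contDiff haut hfix hnz

/-- If `φ z = c z + b`, `c ≠ 1`, is automorphic for `f`, and `n` is the order of
vanishing of `f - f z₀` at the fixed point `z₀ = b/(1-c)`, then `c^n = 1`. -/
theorem stmt5 (f : ℂ → ℂ) (hf : Differentiable ℂ f)
    (hnc : ¬ ∃ C : ℂ, ∀ w, f w = C)
    (c b : ℂ) (hc : c ≠ 1)
    (haut : ∀ z : ℂ, f (c * z + b) = f z)
    (n : ℕ) (hn : 2 ≤ n)
    (hvan : ∀ k, 1 ≤ k → k < n → iteratedDeriv k f (b / (1 - c)) = 0)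
    (hnz : iteratedDeriv n f (b / (1 - c)) ≠ 0) :
    c ^ n = 1 :=
  stmt5_general f hf c b hc haut n hnz
end

section
/- Let f be entire and non-constant, and let G be the group of affine maps φ(z) = cz + b with f ∘ φ = f. Then for every z ∈ ℂ, the orbit {φ(z) : φ ∈ G} is a discrete subset of ℂ (has no accumulation point in ℂ). -/
/-!
Every map in the group fixes `f`, so the whole orbit of `z` lies in the fibre `f ⁻¹' {f z}`.
An accumulation point of that fibre would force `f ≡ f z` by the identity theorem.
-/

open Filter Set

theorem AnalyticOnNhd.not_accPt_preimage_singleton {𝕜 E : Type*} [NontriviallyNormedField 𝕜]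
    [ConnectedSpace 𝕜] [NormedAddCommGroup E] [NormedSpace 𝕜 E] {f : 𝕜 → E}
    (hf : AnalyticOnNhd 𝕜 f univ) (hnc : ¬ ∃ C : E, ∀ w, f w = C) (a : E) (x : 𝕜) :
    ¬ AccPt x (𝓟 (f ⁻¹' {a})) := fun hx =>
  hnc ⟨a, congrFun (hf.eq_of_frequently_eq (fun _ _ => analyticAt_const)
    (accPt_iff_frequently_nhdsNE.mp hx))⟩

theorem affine_orbit_subset_preimage (f : ℂ → ℂ) (z : ℂ) :
    {w : ℂ | ∃ c b : ℂ, c ≠ 0 ∧ (∀ u, f (c * u + b) = f u) ∧ w = c * z + b} ⊆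
      f ⁻¹' {f z} := by
  rintro _ ⟨c, b, -, hfcb, rfl⟩
  exact hfcb z

/-- For non-constant entire `f`, the orbit of any point under the group of
affine automorphic maps has no accumulation point in `ℂ`. -/
theorem stmt9 (f : ℂ → ℂ) (hf : Differentiable ℂ f)
    (hnc : ¬ ∃ C : ℂ, ∀ w, f w = C) (z : ℂ) :
    ∀ x : ℂ, ¬ AccPt x (Filter.principal
      {w : ℂ | ∃ c b : ℂ, c ≠ 0 ∧ (∀ u, f (c * u + b) = f u) ∧
        w = c * z + b}) := fun x hx =>
  (Complex.analyticOnNhd_univ_iff_differentiable.mpr hf).not_accPt_preimage_singleton hnc (f z) x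
    (hx.mono (principal_mono.mpr (affine_orbit_subset_preimage f z)))
end

section
/- Let f be entire and non-constant, and suppose the affine map φ(z) = cz + b (c ≠ 0) satisfies f ∘ φ = f. Then |c| = 1. -/
/-!
Contracting case: if `‖c‖ < 1`, the map `φ z = c z + b` has the attracting fixed point
`z₀ = b / (1 - c)`, and `f w = f (φⁿ w) → f z₀`, so `f` is constant. The expanding case
reduces to this one through `φ⁻¹ z = c⁻¹ z - c⁻¹ b`, which also leaves `f` invariant.
-/

open Filter Topology

section

variable {𝕜 X : Type*} [NormedField 𝕜]

theorem apply_affine_inv_eq {f : 𝕜 → X} {c b : 𝕜} (hc : c ≠ 0)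
    (hinv : ∀ z, f (c * z + b) = f z) (z : 𝕜) : f (c⁻¹ * z + -b / c) = f z := by
  rw [← hinv]
  congr 1
  field_simp
  ring

variable [TopologicalSpace X] [T2Space X]

theorem apply_eq_apply_zero_of_apply_mul_eq {f : 𝕜 → X} (hf : Continuous f) {c : 𝕜}
    (hc : ‖c‖ < 1) (hinv : ∀ z, f (c * z) = f z) (w : 𝕜) : f w = f 0 := by
  have hpow : ∀ n : ℕ, f (c ^ n * w) = f w := by
    intro n
    induction n with
    | zero => simp
    | succ n ih => rw [pow_succ', mul_assoc, hinv, ih]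
  have hlim : Tendsto (fun n : ℕ => c ^ n * w) atTop (𝓝 0) := by
    simpa using (tendsto_pow_atTop_nhds_zero_of_norm_lt_one hc).mul_const w
  have hflim : Tendsto (fun n : ℕ => f (c ^ n * w)) atTop (𝓝 (f 0)) :=
    (hf.tendsto 0).comp hlim
  simp only [hpow] at hflim
  exact tendsto_nhds_unique tendsto_const_nhds hflim

theorem exists_eq_const_of_apply_affine_eq {f : 𝕜 → X} (hf : Continuous f) {c b : 𝕜}
    (hc : ‖c‖ < 1) (hinv : ∀ z, f (c * z + b) = f z) : ∃ C, ∀ w, f w = C := by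
  have hc1 : 1 - c ≠ 0 := sub_ne_zero.mpr (by rintro rfl; simp at hc)
  set z₀ := b / (1 - c)
  have hconj : ∀ w, c * (z₀ + w) + b = z₀ + c * w := by
    intro w
    simp only [z₀]
    field_simp
    ring
  have hg : ∀ w, f (z₀ + w) = f (z₀ + 0) :=
    apply_eq_apply_zero_of_apply_mul_eq (hf.comp (continuous_const_add z₀)) hc
      fun w => by rw [← hconj, hinv]
  refine ⟨f z₀, fun w => ?_⟩
  simpa using hg (w - z₀)

end

/-- An affine automorphic map `φ z = c z + b` of a non-constant entire function
has `|c| = 1`. -/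
theorem stmt18 (f : ℂ → ℂ) (hf : Differentiable ℂ f)
    (hnc : ¬ ∃ C : ℂ, ∀ w, f w = C)
    (c b : ℂ) (hc0 : c ≠ 0)
    (haut : ∀ z : ℂ, f (c * z + b) = f z) :
    ‖c‖ = 1 := by
  rcases lt_trichotomy ‖c‖ 1 with hlt | heq | hgt
  · exact absurd (exists_eq_const_of_apply_affine_eq hf.continuous hlt haut) hnc
  · exact heq
  · have hinv_lt : ‖c⁻¹‖ < 1 := by
      rw [norm_inv]
      exact inv_lt_one_of_one_lt₀ hgt
    exact absurd (exists_eq_const_of_apply_affine_eq hf.continuous hinv_lt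
      (apply_affine_inv_eq hc0 haut)) hnc
end
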